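/- Fictitious space / stable decomposition lemma (lower bound): let A and M⁻¹ = Σⱼ Rⱼᵀ Aⱼ⁻¹ Rⱼ be as in additive Schwarz with Aⱼ = Rⱼ A Rⱼᵀ. Suppose every u ∈ ℝⁿ admits a decomposition u = Σⱼ Rⱼᵀ uⱼ with Σⱼ uⱼᵀ Aⱼ uⱼ ≤ C₀ uᵀ A u. Then λ_min(M⁻¹A) ≥ 1/C₀, i.e., uᵀ A u ≤ C₀ · uᵀ A M⁻¹ A u for all u. -/

import Mathlib

/-!
For `w = A u`, the quantity `uᵀ A M⁻¹ A u` equals `Σⱼ (Rⱼ w)ᵀ Aⱼ⁻¹ (Rⱼ w)`, while a decomposition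
`u = Σⱼ Rⱼᵀ uⱼ` gives `uᵀ A u = Σⱼ uⱼᵀ Rⱼ w`. Expanding `0 ≤ (uⱼ - C₀ Aⱼ⁻¹ Rⱼ w)ᵀ Aⱼ (uⱼ - C₀ Aⱼ⁻¹ Rⱼ w)`
and summing over `j` yields `2 C₀ uᵀ A u ≤ Σⱼ uⱼᵀ Aⱼ uⱼ + C₀² uᵀ A M⁻¹ A u`, and the stable
decomposition bounds the first term on the right by `C₀ uᵀ A u`.
-/

open Matrix

namespace Matrix

section CommSemiring

variable {α ι n : Type*} [CommSemiring α] {κ : ι → Type*}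

lemma IsHermitian.isSymm [StarRing α] [TrivialStar α] {A : Matrix n n α} (hA : A.IsHermitian) :
    A.IsSymm :=
  (conjTranspose_eq_transpose_of_trivial A).symm.trans hA.eq

variable [Fintype ι] [Fintype n] [∀ j, Fintype (κ j)]

lemma IsSymm.dotProduct_mulVec_comm {A : Matrix n n α} (hA : A.IsSymm) (x y : n → α) :
    x ⬝ᵥ (A *ᵥ y) = y ⬝ᵥ (A *ᵥ x) := by
  rw [dotProduct_mulVec, ← mulVec_transpose, hA.eq, dotProduct_comm]

lemma IsSymm.dotProduct_mul_mul_mulVec {A : Matrix n n α} (hA : A.IsSymm) (M : Matrix n n α)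
    (u : n → α) : u ⬝ᵥ ((A * M * A) *ᵥ u) = (A *ᵥ u) ⬝ᵥ (M *ᵥ (A *ᵥ u)) := by
  rw [← mulVec_mulVec, ← mulVec_mulVec, dotProduct_mulVec, ← mulVec_transpose, hA.eq]

lemma sum_transpose_mulVec_dotProduct (R : ∀ j, Matrix (κ j) n α) (x : ∀ j, κ j → α)
    (w : n → α) : (∑ j, (R j)ᵀ *ᵥ x j) ⬝ᵥ w = ∑ j, x j ⬝ᵥ (R j *ᵥ w) := by
  simp only [sum_dotProduct, mulVec_transpose, dotProduct_mulVec]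

lemma dotProduct_sum_transpose_mul_mul_mulVec (R : ∀ j, Matrix (κ j) n α)
    (B : ∀ j, Matrix (κ j) (κ j) α) (w : n → α) :
    w ⬝ᵥ ((∑ j, (R j)ᵀ * B j * R j) *ᵥ w) = ∑ j, (R j *ᵥ w) ⬝ᵥ (B j *ᵥ (R j *ᵥ w)) := by
  rw [sum_mulVec, dotProduct_sum]
  refine Finset.sum_congr rfl fun j _ => ?_
  rw [← mulVec_mulVec, ← mulVec_mulVec, dotProduct_mulVec, vecMul_transpose]

end CommSemiring

variable {m n : Type*} [Fintype m] [Fintype n]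

lemma vecMul_injective_of_rank_eq_card {R : Matrix m n ℝ} (hR : R.rank = Fintype.card m) :
    Function.Injective R.vecMul := by
  rw [vecMul_injective_iff, linearIndependent_iff_card_eq_finrank_span, Set.finrank,
    ← rank_eq_finrank_span_row, hR]

lemma PosDef.mul_mul_transpose_of_rank_eq_card [DecidableEq m] {A : Matrix n n ℝ}
    (hA : A.PosDef) {R : Matrix m n ℝ} (hR : R.rank = Fintype.card m) : (R * A * Rᵀ).PosDef := by
  simpa only [conjTranspose_eq_transpose_of_trivial] using
    hA.mul_mul_conjTranspose_same (vecMul_injective_of_rank_eq_card hR)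

lemma PosDef.two_mul_dotProduct_le [DecidableEq m] {B : Matrix m m ℝ} (hB : B.PosDef)
    (x y : m → ℝ) : 2 * (x ⬝ᵥ y) ≤ x ⬝ᵥ (B *ᵥ x) + y ⬝ᵥ (B⁻¹ *ᵥ y) := by
  set z := B⁻¹ *ᵥ y
  have hy : y = B *ᵥ z := by
    rw [mulVec_mulVec, mul_nonsing_inv _ ((isUnit_iff_isUnit_det B).mp hB.isUnit), one_mulVec]
  have hsymm := hB.isHermitian.isSymm.dotProduct_mulVec_comm
  have hsq := hB.posSemidef.dotProduct_mulVec_nonneg (x - z)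
  simp only [star_trivial, mulVec_sub, sub_dotProduct, dotProduct_sub] at hsq
  have hxy : x ⬝ᵥ y = z ⬝ᵥ (B *ᵥ x) := by rw [hy, hsymm]
  have hyz : y ⬝ᵥ z = z ⬝ᵥ (B *ᵥ z) := by rw [hy, dotProduct_comm]
  rw [hxy, hyz]
  linarith [hsymm x z]

end Matrix

theorem stmt13_general {n N : ℕ} (A : Matrix (Fin n) (Fin n) ℝ) (hA : A.PosDef)
    (nj : Fin N → ℕ) (R : ∀ j, Matrix (Fin (nj j)) (Fin n) ℝ)
    (hR : ∀ j, (R j).rank = nj j)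
    (Minv : Matrix (Fin n) (Fin n) ℝ)
    (hM : Minv = ∑ j, (R j)ᵀ * (R j * A * (R j)ᵀ)⁻¹ * R j)
    (C₀ : ℝ) (hC₀ : 0 < C₀)
    (hdecomp : ∀ u : Fin n → ℝ, ∃ uloc : ∀ j, Fin (nj j) → ℝ,
      u = ∑ j, (R j)ᵀ *ᵥ uloc j ∧
      ∑ j, uloc j ⬝ᵥ ((R j * A * (R j)ᵀ) *ᵥ uloc j) ≤ C₀ * (u ⬝ᵥ (A *ᵥ u))) :
    ∀ u : Fin n → ℝ, u ⬝ᵥ (A *ᵥ u) ≤ C₀ * (u ⬝ᵥ ((A * Minv * A) *ᵥ u)) := by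
  intro u
  obtain ⟨uloc, hu, hstable⟩ := hdecomp u
  set w := A *ᵥ u
  have henergy : u ⬝ᵥ w = ∑ j, uloc j ⬝ᵥ (R j *ᵥ w) := by
    conv_lhs => rw [hu]
    exact sum_transpose_mulVec_dotProduct R uloc w
  have hprecond : u ⬝ᵥ ((A * Minv * A) *ᵥ u) =
      ∑ j, (R j *ᵥ w) ⬝ᵥ ((R j * A * (R j)ᵀ)⁻¹ *ᵥ (R j *ᵥ w)) := by
    rw [hA.isHermitian.isSymm.dotProduct_mul_mul_mulVec, hM,
      dotProduct_sum_transpose_mul_mul_mulVec]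
  have hlocal (j) : 2 * C₀ * (uloc j ⬝ᵥ (R j *ᵥ w)) ≤
      uloc j ⬝ᵥ ((R j * A * (R j)ᵀ) *ᵥ uloc j) +
        C₀ ^ 2 * ((R j *ᵥ w) ⬝ᵥ ((R j * A * (R j)ᵀ)⁻¹ *ᵥ (R j *ᵥ w))) := by
    have hAj : (R j * A * (R j)ᵀ).PosDef :=
      hA.mul_mul_transpose_of_rank_eq_card (by rw [hR, Fintype.card_fin])
    simpa only [dotProduct_smul, mulVec_smul, smul_dotProduct, smul_eq_mul, mul_assoc, sq] using
      hAj.two_mul_dotProduct_le (uloc j) (C₀ • (R j *ᵥ w))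
  have hsum := Finset.sum_le_sum fun j (_ : j ∈ Finset.univ) => hlocal j
  rw [Finset.sum_add_distrib, ← Finset.mul_sum, ← Finset.mul_sum, ← henergy, ← hprecond] at hsum
  have hscaled : C₀ * (u ⬝ᵥ w) ≤ C₀ * (C₀ * (u ⬝ᵥ ((A * Minv * A) *ᵥ u))) := by linarith
  exact le_of_mul_le_mul_left hscaled hC₀

/-- Stable decomposition lemma (lower bound for additive Schwarz): if every `u`
admits a decomposition `u = Σⱼ Rⱼᵀ uⱼ` with `Σⱼ uⱼᵀ Aⱼ uⱼ ≤ C₀ uᵀ A u`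
(`Aⱼ = Rⱼ A Rⱼᵀ`), then `λ_min(M⁻¹A) ≥ 1/C₀`, i.e.
`uᵀ A u ≤ C₀ · uᵀ A M⁻¹ A u` for all `u`, where `M⁻¹ = Σⱼ Rⱼᵀ Aⱼ⁻¹ Rⱼ`. -/
theorem stmt13 {n N : ℕ} (A : Matrix (Fin n) (Fin n) ℝ) (hA : A.PosDef)
    (nj : Fin N → ℕ) (R : ∀ j, Matrix (Fin (nj j)) (Fin n) ℝ)
    (hR : ∀ j, (R j).rank = nj j)
    (Minv : Matrix (Fin n) (Fin n) ℝ)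
    (hM : Minv = ∑ j, (R j)ᵀ * (R j * A * (R j)ᵀ)⁻¹ * R j)
    (hMpd : Minv.PosDef)
    (C₀ : ℝ) (hC₀ : 0 < C₀)
    (hdecomp : ∀ u : Fin n → ℝ, ∃ uloc : ∀ j, Fin (nj j) → ℝ,
      u = ∑ j, (R j)ᵀ *ᵥ uloc j ∧
      ∑ j, uloc j ⬝ᵥ ((R j * A * (R j)ᵀ) *ᵥ uloc j) ≤ C₀ * (u ⬝ᵥ (A *ᵥ u))) :
    ∀ u : Fin n → ℝ, u ⬝ᵥ (A *ᵥ u) ≤ C₀ * (u ⬝ᵥ ((A * Minv * A) *ᵥ u)) :=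
  stmt13_general A hA nj R hR Minv hM C₀ hC₀ hdecomp
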